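/- If a continuously differentiable covector field A : ℝ⁴ → ℝ⁴ satisfies the invariance conditions L_ξA = 0 for the six vector fields ξ = e₁, ξ = e₂, ξ = e₃, ξ = e₄, ξ = e₁₃ = (x³, 0, −x¹, 0) and ξ = e₂₄ = (0, x⁴, 0, x²), then A ≡ 0. In other words, the class P₍₆,₂₎ of potentials invariant under all translations, the rotation e₁₃ and the pseudo-rotation e₂₄ is empty (contains only the zero field). -/

import Mathlib

open Real

/-- Partial derivative of a scalar function on ℝ⁴ in the j-th coordinate direction. -/
noncomputable def pd (j : Fin 4) (f : (Fin 4 → ℝ) → ℝ) (x : Fin 4 → ℝ) : ℝ :=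
  fderiv ℝ f x (Pi.single j 1)

/-- The i-th component of the Lie derivative of the covector field A along
the vector field ξ at the point x:  Σ_j ξ^j ∂_j A_i + Σ_j A_j ∂_i ξ^j. -/
noncomputable def lieCov (ξ A : (Fin 4 → ℝ) → Fin 4 → ℝ) (x : Fin 4 → ℝ) (i : Fin 4) : ℝ :=
  (∑ j : Fin 4, ξ x j * pd j (fun y => A y i) x)
    + ∑ j : Fin 4, A x j * pd i (fun y => ξ y j) x

/-- Invariance condition L_ξ A = 0 on all of ℝ⁴. -/
def PInvariant (ξ A : (Fin 4 → ℝ) → Fin 4 → ℝ) : Prop :=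
  ∀ x i, lieCov ξ A x i = 0

/-- Invariance condition L_ξ A = 0 on a set M. -/
def PInvariantOn (ξ A : (Fin 4 → ℝ) → Fin 4 → ℝ) (M : Set (Fin 4 → ℝ)) : Prop :=
  ∀ x ∈ M, ∀ i, lieCov ξ A x i = 0

def e1 : (Fin 4 → ℝ) → Fin 4 → ℝ := fun _ => ![1, 0, 0, 0]
def e2 : (Fin 4 → ℝ) → Fin 4 → ℝ := fun _ => ![0, 1, 0, 0]
def e3 : (Fin 4 → ℝ) → Fin 4 → ℝ := fun _ => ![0, 0, 1, 0]
def e4 : (Fin 4 → ℝ) → Fin 4 → ℝ := fun _ => ![0, 0, 0, 1]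
def e12 : (Fin 4 → ℝ) → Fin 4 → ℝ := fun x => ![-x 1, x 0, 0, 0]
def e13 : (Fin 4 → ℝ) → Fin 4 → ℝ := fun x => ![x 2, 0, -x 0, 0]
def e23 : (Fin 4 → ℝ) → Fin 4 → ℝ := fun x => ![0, -x 2, x 1, 0]
def e14 : (Fin 4 → ℝ) → Fin 4 → ℝ := fun x => ![x 3, 0, 0, x 0]
def e24 : (Fin 4 → ℝ) → Fin 4 → ℝ := fun x => ![0, x 3, 0, x 1]
def e34 : (Fin 4 → ℝ) → Fin 4 → ℝ := fun x => ![0, 0, x 3, x 2]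

/-!
Translation invariance kills every partial derivative of `A`, so `L_ξ A = 0` reduces to the
algebraic condition `Σ_j A_j ∂_i ξ^j = 0`. For the linear fields `e₁₃` and `e₂₄` the matrix
`∂_i ξ^j` is invertible on the coordinates they move, which forces `A₁ = A₃ = 0` and
`A₂ = A₄ = 0` respectively.
-/

lemma pd_const (j : Fin 4) (c : ℝ) (x : Fin 4 → ℝ) : pd j (fun _ => c) x = 0 := by
  simp [pd]

lemma pd_coord (j k : Fin 4) (x : Fin 4 → ℝ) :
    pd j (fun y => y k) x = (Pi.single j 1 : Fin 4 → ℝ) k := by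
  simp [pd, (hasFDerivAt_apply k x).fderiv]

lemma pd_neg_coord (j k : Fin 4) (x : Fin 4 → ℝ) :
    pd j (fun y => -y k) x = -(Pi.single j 1 : Fin 4 → ℝ) k := by
  simp [pd, fderiv_fun_neg, (hasFDerivAt_apply k x).fderiv]

section

variable {A : (Fin 4 → ℝ) → Fin 4 → ℝ}

lemma lieCov_const (v : Fin 4 → ℝ) (x : Fin 4 → ℝ) (i : Fin 4) :
    lieCov (fun _ => v) A x i = ∑ j, v j * pd j (fun y => A y i) x := by
  simp [lieCov, pd_const]

lemma pd_eq_zero_of_translation_invariant (h1 : PInvariant e1 A) (h2 : PInvariant e2 A)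
    (h3 : PInvariant e3 A) (h4 : PInvariant e4 A) (j k : Fin 4) (x : Fin 4 → ℝ) :
    pd j (fun y => A y k) x = 0 := by
  unfold e1 e2 e3 e4 at *
  fin_cases j
  · simpa [lieCov_const, Fin.sum_univ_four] using h1 x k
  · simpa [lieCov_const, Fin.sum_univ_four] using h2 x k
  · simpa [lieCov_const, Fin.sum_univ_four] using h3 x k
  · simpa [lieCov_const, Fin.sum_univ_four] using h4 x k

variable {x : Fin 4 → ℝ} (hpd : ∀ j k, pd j (fun y => A y k) x = 0)
include hpd

lemma lieCov_eq_of_pd_eq_zero (ξ : (Fin 4 → ℝ) → Fin 4 → ℝ) (i : Fin 4) :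
    lieCov ξ A x i = ∑ j, A x j * pd i (fun y => ξ y j) x := by
  simp [lieCov, hpd]

lemma apply_zero_two_eq_zero_of_e13_invariant (h : PInvariant e13 A) :
    A x 0 = 0 ∧ A x 2 = 0 := by
  have h0 := h x 0
  have h2 := h x 2
  rw [lieCov_eq_of_pd_eq_zero hpd] at h0 h2
  simp [e13, Fin.sum_univ_four, pd_const, pd_coord, pd_neg_coord] at h0 h2
  exact ⟨h2, h0⟩

lemma apply_one_three_eq_zero_of_e24_invariant (h : PInvariant e24 A) :
    A x 1 = 0 ∧ A x 3 = 0 := by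
  have h1 := h x 1
  have h3 := h x 3
  rw [lieCov_eq_of_pd_eq_zero hpd] at h1 h3
  simp [e24, Fin.sum_univ_four, pd_const, pd_coord] at h1 h3
  exact ⟨h3, h1⟩

end

theorem class_P62_empty_general (A : (Fin 4 → ℝ) → Fin 4 → ℝ)
    (h1 : PInvariant e1 A) (h2 : PInvariant e2 A)
    (h3 : PInvariant e3 A) (h4 : PInvariant e4 A)
    (h5 : PInvariant e13 A) (h6 : PInvariant e24 A) :
    ∀ x i, A x i = 0 := by
  intro x i
  have hpd := fun j k => pd_eq_zero_of_translation_invariant h1 h2 h3 h4 j k x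
  obtain ⟨hA0, hA2⟩ := apply_zero_two_eq_zero_of_e13_invariant hpd h5
  obtain ⟨hA1, hA3⟩ := apply_one_three_eq_zero_of_e24_invariant hpd h6
  fin_cases i <;> assumption

/-- Class P_{6,2} is empty: invariance under all translations, the rotation
e₁₃ and the pseudo-rotation e₂₄ forces A ≡ 0. -/
theorem class_P62_empty (A : (Fin 4 → ℝ) → Fin 4 → ℝ) (hA : ContDiff ℝ 1 A)
    (h1 : PInvariant e1 A) (h2 : PInvariant e2 A)
    (h3 : PInvariant e3 A) (h4 : PInvariant e4 A)
    (h5 : PInvariant e13 A) (h6 : PInvariant e24 A) :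
    ∀ x i, A x i = 0 :=
  class_P62_empty_general A h1 h2 h3 h4 h5 h6
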